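/- arXiv:2001.03403 — 2 statements merged into one kernel-verified Lean document; each statement's English description precedes it below -/
import Mathlib

section
/- Let σ² > 0, ϑ₂ > 0 and Γ < 0 with −π² < Γ; set Γ₀ = √(−Γ) (so 0 < Γ₀ < π) and λ_ℓ = ϑ₂ (π² ℓ² − Γ₀²) for positive integers ℓ (so λ_ℓ > 0 for all ℓ ≥ 1). Then for all real numbers x, y with 0 ≤ x ≤ y ≤ 1, the series identity ∑_{ℓ=1}^{∞} (σ²/λ_ℓ) · sin(π ℓ x) · sin(π ℓ y) = (σ²/(2ϑ₂)) · sin(Γ₀ x) · sin(Γ₀ (1 − y)) / (Γ₀ · sin(Γ₀)) holds, where the series converges absolutely. -/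
/-!
The `2`-periodic extension of `s ↦ cos (a (1 - s))` from `[0, 2]` is continuous, with Fourier
coefficients `a sin a / (a² - π² n²)`. These are absolutely summable, so the Fourier series
converges pointwise, and pairing the terms `±n` gives, for `0 < a < π` and `t ∈ [0, 2]`,
`∑_{ℓ ≥ 1} cos (π ℓ t) / (π² ℓ² - a²) = 1 / (2 a²) - cos (a (1 - t)) / (2 a sin a)`.
Since `2 sin (π ℓ x) sin (π ℓ y) = cos (π ℓ (y - x)) - cos (π ℓ (y + x))`, subtracting the cases
`t = y + x` and `t = y - x` gives the sine series with `a = Γ₀`; absolute convergence follows by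
comparison with the case `t = 0`.
-/

open Real

open Complex in
theorem integral_exp_mul_cos_one_sub {a : ℝ} {n : ℤ} (h : a ^ 2 ≠ π ^ 2 * n ^ 2) :
    ∫ s in (0:ℝ)..2, exp (-(π * n * I) * s) * (Real.cos (a * (1 - s)) : ℂ)
      = (2 * a * Real.sin a / (a ^ 2 - π ^ 2 * n ^ 2) : ℝ) := by
  set c : ℂ := -(π * n * I)
  have hc : c ^ 2 + a ^ 2 = ((a ^ 2 - π ^ 2 * n ^ 2 : ℝ) : ℂ) := by
    simp only [c]; push_cast; ring_nf; rw [I_sq]; ring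
  have hD : c ^ 2 + a ^ 2 ≠ 0 := by
    rw [hc, ofReal_ne_zero]; exact sub_ne_zero.mpr h
  let F : ℂ → ℂ := fun s =>
    exp (c * s) * (c * cos (a * (1 - s)) - a * sin (a * (1 - s))) / (c ^ 2 + a ^ 2)
  have hF (s : ℝ) :
      HasDerivAt (fun s : ℝ => F s) (exp (c * s) * (Real.cos (a * (1 - s)) : ℂ)) s := by
    refine HasDerivAt.comp_ofReal (e := F) ?_
    have h1 : HasDerivAt (fun z : ℂ => (a : ℂ) * (1 - z)) (-a) s := by
      simpa using ((hasDerivAt_id (s : ℂ)).const_sub 1).const_mul (a : ℂ)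
    refine ((((hasDerivAt_id (s : ℂ)).const_mul c).cexp.mul
      ((h1.ccos.const_mul c).sub (h1.csin.const_mul (a : ℂ)))).div_const _).congr_deriv ?_
    simp only [id, Pi.sub_apply]
    push_cast
    field_simp
    ring
  rw [intervalIntegral.integral_eq_sub_of_hasDerivAt (fun s _ => hF s)
    (by apply Continuous.intervalIntegrable; fun_prop)]
  have hexp : exp (c * (2 : ℝ)) = 1 := by
    rw [show c * ((2 : ℝ) : ℂ) = (-n : ℤ) * (2 * π * I) by simp only [c]; push_cast; ring]
    exact exp_int_mul_two_pi_mul_I _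
  rw [show ((2 * a * Real.sin a / (a ^ 2 - π ^ 2 * n ^ 2) : ℝ) : ℂ)
      = 2 * a * Complex.sin a / (c ^ 2 + a ^ 2) by rw [hc]; push_cast; ring]
  simp only [F, hexp, div_sub_div_same]
  congr 1
  push_cast
  norm_num
  ring

instance : Fact ((0 : ℝ) < 2) := ⟨two_pos⟩

noncomputable def periodizedCosOneSub (a : ℝ) : C(AddCircle (2 : ℝ), ℂ) where
  toFun := AddCircle.liftIco 2 0 fun s => (Real.cos (a * (1 - s)) : ℂ)
  continuous_toFun :=
    AddCircle.liftIco_zero_continuous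
      (by rw [show a * (1 - 2) = -(a * (1 - 0)) by ring, Real.cos_neg]) (by fun_prop)

theorem periodizedCosOneSub_coe (a : ℝ) {t : ℝ} (ht : t ∈ Set.Icc (0 : ℝ) 2) :
    periodizedCosOneSub a t = Real.cos (a * (1 - t)) := by
  rw [periodizedCosOneSub, ContinuousMap.coe_mk]
  rcases ht.2.lt_or_eq with ht2 | rfl
  · exact AddCircle.liftIco_zero_coe_apply ⟨ht.1, ht2⟩
  · rw [AddCircle.coe_period, ← AddCircle.coe_zero,
      AddCircle.liftIco_zero_coe_apply ⟨le_rfl, two_pos⟩,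
      show a * (1 - 2) = -(a * (1 - 0)) by ring, Real.cos_neg]

theorem fourierCoeff_periodizedCosOneSub {a : ℝ} {n : ℤ} (h : a ^ 2 ≠ π ^ 2 * n ^ 2) :
    fourierCoeff (periodizedCosOneSub a) n = (a * Real.sin a / (a ^ 2 - π ^ 2 * n ^ 2) : ℝ) := by
  rw [periodizedCosOneSub, ContinuousMap.coe_mk, fourierCoeff_liftIco_eq,
    fourierCoeffOn_eq_integral]
  have hintegrand : ∀ x ∈ Set.uIcc (0 : ℝ) (0 + 2),
      fourier (-n) (x : AddCircle ((0 : ℝ) + 2 - 0)) • (Real.cos (a * (1 - x)) : ℂ)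
        = Complex.exp (-(π * n * Complex.I) * x) * (Real.cos (a * (1 - x)) : ℂ) := by
    intro x _
    rw [fourier_coe_apply, smul_eq_mul]
    congr 2
    push_cast
    ring
  rw [intervalIntegral.integral_congr hintegrand, zero_add, integral_exp_mul_cos_one_sub h,
    Complex.real_smul]
  push_cast
  ring

theorem sq_lt_pi_sq_mul_sq {a : ℝ} (ha : a ^ 2 < π ^ 2) {n : ℤ} (hn : n ≠ 0) :
    a ^ 2 < π ^ 2 * n ^ 2 := by
  have : (1 : ℝ) ≤ (n : ℝ) ^ 2 := by
    exact_mod_cast one_le_sq_iff_one_le_abs _ |>.mpr (Int.one_le_abs hn)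
  nlinarith

theorem summable_inv_sq_sub_pi_sq_mul_sq {a : ℝ} (ha : a ^ 2 < π ^ 2) :
    Summable fun n : ℤ => (a ^ 2 - π ^ 2 * n ^ 2)⁻¹ := by
  refine summable_of_isBigO (summable_one_div_int_pow.mpr one_lt_two) <|
    Asymptotics.IsBigO.of_bound (π ^ 2 - a ^ 2)⁻¹ ?_
  filter_upwards [Filter.eventually_cofinite_ne 0] with n hn
  have hn2 : (1 : ℝ) ≤ (n : ℝ) ^ 2 := by
    exact_mod_cast one_le_sq_iff_one_le_abs _ |>.mpr (Int.one_le_abs hn)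
  have hgap : (π ^ 2 - a ^ 2) * n ^ 2 ≤ π ^ 2 * n ^ 2 - a ^ 2 := by nlinarith
  have hpos : 0 < (π ^ 2 - a ^ 2) * n ^ 2 := by nlinarith
  rw [Real.norm_eq_abs, Real.norm_eq_abs, abs_inv, abs_sub_comm, abs_of_pos (by linarith),
    abs_of_pos (by positivity), one_div, ← mul_inv]
  exact inv_anti₀ hpos hgap

theorem hasSum_cos_of_hasSum_fourier {T : ℝ} [Fact (0 < T)] {b : ℤ → ℝ}
    (hb : ∀ n, b (-n) = b n) {t : ℝ} {z : ℂ}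
    (h : HasSum (fun n : ℤ => (b n : ℂ) * fourier n (t : AddCircle T)) z) :
    HasSum (fun n : ℕ => 2 * b (n + 1) * Real.cos (2 * π * (n + 1) * t / T)) (z.re - b 0) := by
  have hpair (n : ℤ) :
      (b n : ℂ) * fourier n (t : AddCircle T) + b (-n) * fourier (-n) (t : AddCircle T)
        = (2 * b n * Real.cos (2 * π * n * t / T) : ℝ) := by
    set θ : ℝ := 2 * π * n * t / T
    rw [hb, fourier_coe_apply, fourier_coe_apply, ← mul_add,
      show 2 * π * Complex.I * n * t / T = θ * Complex.I by simp only [θ]; push_cast; ring,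
      show 2 * π * Complex.I * (-n : ℤ) * t / T = -θ * Complex.I by simp only [θ]; push_cast; ring,
      ← Complex.two_cos, ← Complex.ofReal_cos]
    push_cast
    ring
  have hnat := Complex.hasSum_re h.nat_add_neg
  simp only [hpair, Complex.ofReal_re, Complex.add_re] at hnat
  have hshift := (hasSum_nat_add_iff' 1).mpr hnat
  simp only [Nat.cast_add, Nat.cast_one, Int.cast_add, Int.cast_natCast, Int.cast_one, fourier_zero,
    mul_one, Complex.ofReal_re, Finset.range_one, Finset.sum_singleton, CharP.cast_eq_zero,
    mul_zero, zero_mul, zero_div, Real.cos_zero] at hshift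
  rwa [show z.re + b 0 - 2 * b 0 = z.re - b 0 by ring] at hshift

theorem hasSum_cos_div_pi_sq_mul_sq_sub_sq {a : ℝ} (ha : 0 < a) (ha' : a < π) {t : ℝ}
    (ht : t ∈ Set.Icc (0 : ℝ) 2) :
    HasSum (fun ℓ : ℕ => Real.cos (π * (ℓ + 1) * t) / (π ^ 2 * (ℓ + 1) ^ 2 - a ^ 2))
      (1 / (2 * a ^ 2) - Real.cos (a * (1 - t)) / (2 * a * Real.sin a)) := by
  have ha2 : a ^ 2 < π ^ 2 := by gcongr
  have hsin : 0 < Real.sin a := Real.sin_pos_of_pos_of_lt_pi ha ha'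
  have hne (n : ℤ) : a ^ 2 ≠ π ^ 2 * n ^ 2 := by
    rcases eq_or_ne n 0 with rfl | hn
    · simpa using ha.ne'
    · exact (sq_lt_pi_sq_mul_sq ha2 hn).ne
  set b : ℤ → ℝ := fun n => a * Real.sin a / (a ^ 2 - π ^ 2 * n ^ 2)
  have hcoeff : fourierCoeff (periodizedCosOneSub a) = fun n => (b n : ℂ) :=
    funext fun n => fourierCoeff_periodizedCosOneSub (hne n)
  have hsummable : Summable (fourierCoeff (periodizedCosOneSub a)) := by
    rw [hcoeff, Complex.summable_ofReal]
    exact ((summable_inv_sq_sub_pi_sq_mul_sq ha2).mul_left (a * Real.sin a)).congr fun n => rfl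
  have hfourier := has_pointwise_sum_fourier_series_of_summable hsummable (t : AddCircle (2 : ℝ))
  rw [hcoeff, periodizedCosOneSub_coe a ht] at hfourier
  have hcos := (hasSum_cos_of_hasSum_fourier (b := b) (fun n => by simp [b]) hfourier).mul_left
    (-(2 * a * Real.sin a)⁻¹)
  rw [Complex.ofReal_re, show -(2 * a * Real.sin a)⁻¹ * (Real.cos (a * (1 - t)) - b 0)
      = 1 / (2 * a ^ 2) - Real.cos (a * (1 - t)) / (2 * a * Real.sin a) by
    simp only [b]; push_cast; field_simp; ring] at hcos
  refine hcos.congr_fun fun ℓ => ?_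
  have hD : a ^ 2 - π ^ 2 * ((ℓ : ℝ) + 1) ^ 2 ≠ 0 := by
    simpa [sub_eq_zero] using hne (ℓ + 1)
  have hD' : π ^ 2 * ((ℓ : ℝ) + 1) ^ 2 - a ^ 2 ≠ 0 := by
    rwa [← neg_ne_zero, neg_sub]
  simp only [b]
  push_cast
  rw [show 2 * π * (ℓ + 1) * t / 2 = π * (ℓ + 1) * t by ring]
  field_simp
  ring

theorem hasSum_sin_mul_sin_div_pi_sq_mul_sq_sub_sq {a : ℝ} (ha : 0 < a) (ha' : a < π) {x y : ℝ}
    (hx : 0 ≤ x) (hxy : x ≤ y) (hy : y ≤ 1) :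
    HasSum (fun ℓ : ℕ => Real.sin (π * (ℓ + 1) * x) * Real.sin (π * (ℓ + 1) * y)
        / (π ^ 2 * (ℓ + 1) ^ 2 - a ^ 2))
      (Real.sin (a * x) * Real.sin (a * (1 - y)) / (2 * a * Real.sin a)) := by
  have hsub := hasSum_cos_div_pi_sq_mul_sq_sub_sq ha ha' (t := y - x) ⟨by linarith, by linarith⟩
  have hadd := hasSum_cos_div_pi_sq_mul_sq_sub_sq ha ha' (t := y + x) ⟨by linarith, by linarith⟩
  have hsin : Real.sin a ≠ 0 := (Real.sin_pos_of_pos_of_lt_pi ha ha').ne'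
  have hprod : 2 * Real.sin (a * x) * Real.sin (a * (1 - y))
      = Real.cos (a * (1 - (y + x))) - Real.cos (a * (1 - (y - x))) := by
    rw [Real.two_mul_sin_mul_sin, show a * x - a * (1 - y) = -(a * (1 - (y + x))) by ring,
      show a * x + a * (1 - y) = a * (1 - (y - x)) by ring, Real.cos_neg]
  have hval : (1 / (2 * a ^ 2) - Real.cos (a * (1 - (y - x))) / (2 * a * Real.sin a)
      - (1 / (2 * a ^ 2) - Real.cos (a * (1 - (y + x))) / (2 * a * Real.sin a))) / 2
      = Real.sin (a * x) * Real.sin (a * (1 - y)) / (2 * a * Real.sin a) := by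
    field_simp
    linear_combination -a * hprod
  rw [← hval]
  refine ((hsub.sub hadd).div_const 2).congr_fun fun ℓ => ?_
  rw [← sub_div, show π * (ℓ + 1) * (y - x) = π * (ℓ + 1) * y - π * (ℓ + 1) * x by ring,
    show π * (ℓ + 1) * (y + x) = π * (ℓ + 1) * y + π * (ℓ + 1) * x by ring,
    ← Real.two_mul_sin_mul_sin]
  ring

/-- Green's-function series identity in the case `−π² < Γ < 0`:
for `Γ₀ = √(−Γ)` (so `0 < Γ₀ < π`), `λ_ℓ = ϑ₂(π² ℓ² − Γ₀²)` and `0 ≤ x ≤ y ≤ 1`,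
`∑_{ℓ≥1} (σ²/λ_ℓ) sin(π ℓ x) sin(π ℓ y)
  = (σ²/(2ϑ₂)) sin(Γ₀ x) sin(Γ₀ (1 − y)) / (Γ₀ sin Γ₀)`,
with absolute convergence of the series. -/
theorem green_series_sin (σsq ϑ₂ Γ : ℝ) (hσ : 0 < σsq) (hϑ₂ : 0 < ϑ₂)
    (hΓneg : Γ < 0) (hΓlow : -π ^ 2 < Γ)
    (Γ₀ : ℝ) (hΓ₀ : Γ₀ = Real.sqrt (-Γ))
    (lam : ℕ → ℝ) (hlam : ∀ ℓ : ℕ, lam ℓ = ϑ₂ * (π ^ 2 * ℓ ^ 2 - Γ₀ ^ 2))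
    (x y : ℝ) (hx : 0 ≤ x) (hxy : x ≤ y) (hy : y ≤ 1) :
    Summable (fun ℓ : ℕ =>
      |σsq / lam (ℓ + 1) * Real.sin (π * (ℓ + 1) * x) * Real.sin (π * (ℓ + 1) * y)|) ∧
    (∑' ℓ : ℕ, σsq / lam (ℓ + 1) * Real.sin (π * (ℓ + 1) * x) * Real.sin (π * (ℓ + 1) * y))
      = σsq / (2 * ϑ₂) * (Real.sin (Γ₀ * x) * Real.sin (Γ₀ * (1 - y))
          / (Γ₀ * Real.sin Γ₀)) := by
  have hΓ₀pos : 0 < Γ₀ := hΓ₀ ▸ Real.sqrt_pos.mpr (by linarith)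
  have hΓ₀lt : Γ₀ < π := hΓ₀ ▸ (Real.sqrt_lt' pi_pos).mpr (by linarith)
  have hlam' (ℓ : ℕ) : lam (ℓ + 1) = ϑ₂ * (π ^ 2 * (ℓ + 1) ^ 2 - Γ₀ ^ 2) := by
    rw [hlam]; push_cast; ring
  have hD (ℓ : ℕ) : 0 < π ^ 2 * ((ℓ : ℝ) + 1) ^ 2 - Γ₀ ^ 2 := by
    have := sq_lt_pi_sq_mul_sq (a := Γ₀) (by gcongr) (n := ℓ + 1) (by omega)
    push_cast at this
    linarith
  have hinv : Summable fun ℓ : ℕ => 1 / (π ^ 2 * ((ℓ : ℝ) + 1) ^ 2 - Γ₀ ^ 2) := by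
    simpa using
      (hasSum_cos_div_pi_sq_mul_sq_sub_sq hΓ₀pos hΓ₀lt (t := 0) ⟨le_rfl, zero_le_two⟩).summable
  have hsum :=
    (hasSum_sin_mul_sin_div_pi_sq_mul_sq_sub_sq hΓ₀pos hΓ₀lt hx hxy hy).mul_left (σsq / ϑ₂)
  refine ⟨(hinv.mul_left (σsq / ϑ₂)).of_nonneg_of_le (fun _ => abs_nonneg _) fun ℓ => ?_,
    (hsum.congr_fun fun ℓ => ?_).tsum_eq.trans ?_⟩
  · have hcoeff : 0 < σsq / lam (ℓ + 1) := by rw [hlam']; have := hD ℓ; positivity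
    rw [abs_mul, abs_mul, abs_of_pos hcoeff]
    calc σsq / lam (ℓ + 1) * |Real.sin (π * (ℓ + 1) * x)| * |Real.sin (π * (ℓ + 1) * y)|
        ≤ σsq / lam (ℓ + 1) * 1 * 1 := by gcongr <;> exact abs_sin_le_one _
      _ = σsq / ϑ₂ * (1 / (π ^ 2 * ((ℓ : ℝ) + 1) ^ 2 - Γ₀ ^ 2)) := by
        rw [hlam', div_mul_div_comm]; ring
  · rw [hlam']
    field_simp
  · field_simp
end

section
/- Let q > 0, α > 1/2 and c > 0 be real constants. Let (N_n), (M_n), (L_n) be sequences of positive integers and (T_n) a sequence of positive reals, and set Δ_n = T_n / N_n. Assume T_n · Δ_n^q → 0 and L_n M_n Δ_n^α → ∞ as n → ∞. Then M_n · N_n · exp(−c · L_n² · M_n² · Δ_n) → 0 as n → ∞. -/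
/-!
Write `a = L M Δ^α`, which tends to infinity, and `x = Δ^(1 - 2α)`. Since `N ≥ 1` we have
`Δ ≤ T`, so `T Δ^q → 0` forces `Δ ≤ 1` eventually, i.e. `x ≥ 1`. In these variables
`L² M² Δ = a² x`, and `N = T / Δ ≤ Δ^(-q-1)` gives `M N ≤ a x^p` with `p = (α + 1 + q) / (2α - 1)`.
Once `a ≥ 1` and `c a ≥ 2` we get `c a² x ≥ a + x`, hence
`M N e^(-c L² M² Δ) ≤ (x^p e^(-x)) (a e^(-a)) ≤ ⌈p⌉! a e^(-a) → 0`.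
-/

open Real Filter
open scoped Nat Topology

theorem rpow_mul_exp_neg_le_factorial (p : ℝ) {x : ℝ} (hx : 1 ≤ x) :
    x ^ p * exp (-x) ≤ ⌈p⌉₊ ! := by
  have hpow : x ^ p ≤ x ^ ⌈p⌉₊ := by
    rw [← rpow_natCast]
    exact rpow_le_rpow_of_exponent_le hx (Nat.le_ceil p)
  have hfact : x ^ ⌈p⌉₊ ≤ ⌈p⌉₊ ! * exp x := by
    have := pow_div_factorial_le_exp x (zero_le_one.trans hx) ⌈p⌉₊
    rwa [div_le_iff₀ (by positivity), mul_comm] at this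
  calc x ^ p * exp (-x) ≤ ⌈p⌉₊ ! * exp x * exp (-x) := by gcongr; exact hpow.trans hfact
    _ = ⌈p⌉₊ ! := by rw [mul_assoc, ← exp_add, add_neg_cancel, exp_zero, mul_one]

theorem mul_rpow_mul_exp_neg_le_factorial {p c a x : ℝ} (hx : 1 ≤ x) (ha : 1 ≤ a)
    (hca : 2 ≤ c * a) :
    a * x ^ p * exp (-(c * a ^ 2 * x)) ≤ ⌈p⌉₊ ! * (a * exp (-a)) := by
  have hexp : exp (-(c * a ^ 2 * x)) ≤ exp (-x) * exp (-a) := by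
    rw [← exp_add, exp_le_exp]
    nlinarith [mul_le_mul_of_nonneg_right hca (by positivity : 0 ≤ a * x)]
  calc a * x ^ p * exp (-(c * a ^ 2 * x)) ≤ a * x ^ p * (exp (-x) * exp (-a)) := by gcongr
    _ = x ^ p * exp (-x) * (a * exp (-a)) := by ring
    _ ≤ ⌈p⌉₊ ! * (a * exp (-a)) := by
      gcongr
      exact rpow_mul_exp_neg_le_factorial p hx

theorem le_one_of_mul_rpow_le_one {q T N : ℝ} (hq : 0 < q) (hT : 0 < T) (hN : 1 ≤ N)
    (h : T * (T / N) ^ q ≤ 1) : T / N ≤ 1 := by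
  by_contra! hlt
  have hD : T / N ≤ T := div_le_self hT.le hN
  have : 1 < (T / N) ^ q := one_lt_rpow hlt hq
  nlinarith

theorem mul_mul_exp_le_rpow {q α c L M N T D a : ℝ} (hα : 1 / 2 < α) (hL : 1 ≤ L)
    (hM : 0 ≤ M) (hN : 0 < N) (hT : 0 < T) (hD : D = T / N) (hTq : T * D ^ q ≤ 1)
    (ha : a = L * M * D ^ α) :
    M * N * exp (-c * L ^ 2 * M ^ 2 * D)
      ≤ a * (D ^ (1 - 2 * α)) ^ ((α + 1 + q) / (2 * α - 1))
        * exp (-(c * a ^ 2 * D ^ (1 - 2 * α))) := by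
  have hDpos : 0 < D := hD ▸ div_pos hT hN
  have hsubst : L ^ 2 * M ^ 2 * D = a ^ 2 * D ^ (1 - 2 * α) := by
    have hsq : (D ^ α) ^ 2 = D ^ (2 * α) := by
      rw [← rpow_natCast, ← rpow_mul hDpos.le, mul_comm, Nat.cast_ofNat]
    have hsplit : D = D ^ (2 * α) * D ^ (1 - 2 * α) := by
      rw [← rpow_add hDpos, add_sub_cancel, rpow_one]
    nth_rw 1 [hsplit]
    rw [ha, mul_pow, mul_pow, hsq]
    ring
  have hpow : D ^ α * (D ^ (1 - 2 * α)) ^ ((α + 1 + q) / (2 * α - 1)) = D ^ (-q) / D := by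
    have hexponent : (1 - 2 * α) * ((α + 1 + q) / (2 * α - 1)) = -(α + 1 + q) := by
      rw [mul_div_assoc', div_eq_iff (by linarith)]
      ring
    rw [← rpow_mul hDpos.le, hexponent, ← rpow_add hDpos, ← rpow_sub_one hDpos.ne']
    congr 1
    ring
  have hN : N ≤ D ^ (-q) / D := by
    have hTD : T ≤ D ^ (-q) := by
      rwa [rpow_neg hDpos.le, ← one_div, le_div_iff₀ (by positivity)]
    calc N = T / D := by rw [hD]; field_simp
      _ ≤ D ^ (-q) / D := by gcongr
  calc M * N * exp (-c * L ^ 2 * M ^ 2 * D)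
      ≤ L * M * (D ^ (-q) / D) * exp (-c * L ^ 2 * M ^ 2 * D) := by
        gcongr
        exact le_mul_of_one_le_left hM hL
    _ = _ := by
      rw [show -c * L ^ 2 * M ^ 2 * D = -(c * a ^ 2 * D ^ (1 - 2 * α)) by
        linear_combination (-c) * hsubst, ← hpow, ha]
      ring

theorem replacement_tv_vanishes_general (q α c : ℝ) (hq : 0 < q) (hα : 1 / 2 < α) (hc : 0 < c)
    (N M L : ℕ → ℕ) (T : ℕ → ℝ) (Δ : ℕ → ℝ)
    (hN : ∀ n, 0 < N n) (hL : ∀ n, 0 < L n) (hT : ∀ n, 0 < T n)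
    (hΔ : ∀ n, Δ n = T n / N n)
    (h₁ : Filter.Tendsto (fun n => T n * (Δ n) ^ q) Filter.atTop (nhds 0))
    (h₂ : Filter.Tendsto (fun n => (L n : ℝ) * (M n : ℝ) * (Δ n) ^ α)
            Filter.atTop Filter.atTop) :
    Filter.Tendsto
      (fun n => (M n : ℝ) * (N n : ℝ) *
        Real.exp (-c * (L n : ℝ) ^ 2 * (M n : ℝ) ^ 2 * Δ n))
      Filter.atTop (nhds 0) := by
  set p := (α + 1 + q) / (2 * α - 1)
  have hlim : Tendsto (fun n => (⌈p⌉₊ ! : ℝ) *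
      ((L n : ℝ) * M n * Δ n ^ α * exp (-((L n : ℝ) * M n * Δ n ^ α)))) atTop (𝓝 0) := by
    simpa using ((tendsto_pow_mul_exp_neg_atTop_nhds_zero 1).comp h₂).const_mul (⌈p⌉₊ ! : ℝ)
  refine squeeze_zero' (Eventually.of_forall fun n => by positivity) ?_ hlim
  filter_upwards [h₁.eventually_le_const one_pos, h₂.eventually_ge_atTop (max 1 (2 / c))]
    with n hTq ha
  have hN1 : (1 : ℝ) ≤ N n := by exact_mod_cast hN n
  have hΔpos : 0 < Δ n := hΔ n ▸ div_pos (hT n) (by linarith)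
  have hΔ1 : Δ n ≤ 1 := hΔ n ▸ le_one_of_mul_rpow_le_one hq (hT n) hN1 (hΔ n ▸ hTq)
  have hx : 1 ≤ Δ n ^ (1 - 2 * α) :=
    one_le_rpow_of_pos_of_le_one_of_nonpos hΔpos hΔ1 (by linarith)
  calc _ ≤ _ := mul_mul_exp_le_rpow hα (by exact_mod_cast hL n) (Nat.cast_nonneg _)
          (by linarith) (hT n) (hΔ n) hTq rfl
    _ ≤ _ := mul_rpow_mul_exp_neg_le_factorial hx (le_of_max_le_left ha)
          ((div_le_iff₀' hc).1 (le_of_max_le_right ha))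

/-- Analytic content of part (ii) of the main theorem: if `T_n Δ_n^q → 0` and
`L_n M_n Δ_n^α → ∞` with `Δ_n = T_n / N_n`, `q > 0`, `α > 1/2`, `c > 0`, then
`M_n N_n exp(−c L_n² M_n² Δ_n) → 0`. -/
theorem replacement_tv_vanishes (q α c : ℝ) (hq : 0 < q) (hα : 1 / 2 < α) (hc : 0 < c)
    (N M L : ℕ → ℕ) (T : ℕ → ℝ) (Δ : ℕ → ℝ)
    (hN : ∀ n, 0 < N n) (hM : ∀ n, 0 < M n) (hL : ∀ n, 0 < L n) (hT : ∀ n, 0 < T n)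
    (hΔ : ∀ n, Δ n = T n / N n)
    (h₁ : Filter.Tendsto (fun n => T n * (Δ n) ^ q) Filter.atTop (nhds 0))
    (h₂ : Filter.Tendsto (fun n => (L n : ℝ) * (M n : ℝ) * (Δ n) ^ α)
            Filter.atTop Filter.atTop) :
    Filter.Tendsto
      (fun n => (M n : ℝ) * (N n : ℝ) *
        Real.exp (-c * (L n : ℝ) ^ 2 * (M n : ℝ) ^ 2 * Δ n))
      Filter.atTop (nhds 0) :=
  replacement_tv_vanishes_general q α c hq hα hc N M L T Δ hN hL hT hΔ h₁ h₂
end
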